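/- For every real κ with 1 < κ ≤ 2, there exists a unique vector w ∈ ℝ⁵ (the bridge-ball vector) satisfying ⟨w, w⟩ = 1, ⟨w_x, w⟩ = −1, ⟨w_c, w⟩ = −1, ⟨w_f, w⟩ = −1, ⟨w_c*, w⟩ = 1 and ⟨w_z, w⟩ ≥ 1; moreover this unique w satisfies ⟨w_z, w⟩ = √(3 + 2√κ − κ), and √(3 + 2√κ − κ) > 1. -/
import Mathlib


noncomputable section

/-- The Lorentzian product on ℝ⁵: ⟨u,v⟩ = u₁v₁ + u₂v₂ + u₃v₃ + u₄v₄ − u₅v₅. -/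
def lprod5 (u v : Fin 5 → ℝ) : ℝ :=
  u 0 * v 0 + u 1 * v 1 + u 2 * v 2 + u 3 * v 3 - u 4 * v 4

/-- Inversive coordinates of the blow-ups to ℝ³ of the standard pyramidal disk
packing, its mirror and tangency disks, and the half-space `{z ≥ 0}`. -/
def wx : Fin 5 → ℝ := ![0, -1, 0, 1, 1]
def wc (κ : ℝ) : Fin 5 → ℝ := ![0, 1 - κ, 0, -1, κ - 1]
def wf (κ : ℝ) : Fin 5 → ℝ := ![2 / Real.sqrt κ, 0, 0, 2 / κ - 1, 2 / κ]
def wmc : Fin 5 → ℝ := ![0, 1, 0, 1, 1]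
def wmf (κ : ℝ) : Fin 5 → ℝ := ![-(2 / Real.sqrt κ), 0, 0, 2 / κ - 1, 2 / κ]
def wcs (κ : ℝ) : Fin 5 → ℝ :=
  ![0, -(Real.sqrt κ / 2), 0, -(1 / Real.sqrt κ), (κ - 2) / (2 * Real.sqrt κ)]
def wt (κ : ℝ) : Fin 5 → ℝ :=
  ![0, -(2 / Real.sqrt (κ ^ 2 + 4)), 0, κ / Real.sqrt (κ ^ 2 + 4), 0]
def wz : Fin 5 → ℝ := ![0, 0, 1, 0, 0]

/-- For `1 < κ ≤ 2`, there is a unique bridge-ball vector `w` with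
`⟨w,w⟩ = 1`, `⟨w_x,w⟩ = ⟨w_c,w⟩ = ⟨w_f,w⟩ = −1`, `⟨w_c*,w⟩ = 1` and
`⟨w_z,w⟩ ≥ 1`; it satisfies `⟨w_z,w⟩ = √(3 + 2√κ − κ) > 1`. -/
theorem bridge_ball_exists_unique (κ : ℝ) (hκ1 : 1 < κ) (hκ2 : κ ≤ 2) :
    (∃! w : Fin 5 → ℝ,
      lprod5 w w = 1 ∧ lprod5 wx w = -1 ∧ lprod5 (wc κ) w = -1 ∧
      lprod5 (wf κ) w = -1 ∧ lprod5 (wcs κ) w = 1 ∧ 1 ≤ lprod5 wz w) ∧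
    (∀ w : Fin 5 → ℝ,
      lprod5 w w = 1 → lprod5 wx w = -1 → lprod5 (wc κ) w = -1 →
      lprod5 (wf κ) w = -1 → lprod5 (wcs κ) w = 1 → 1 ≤ lprod5 wz w →
      lprod5 wz w = Real.sqrt (3 + 2 * Real.sqrt κ - κ)) ∧
    1 < Real.sqrt (3 + 2 * Real.sqrt κ - κ) := by
  have hκ0 : (0:ℝ) < κ := by linarith
  obtain ⟨s, hs1, rfl⟩ : ∃ s : ℝ, 1 < s ∧ s ^ 2 = κ := by
    refine ⟨Real.sqrt κ, ?_, Real.sq_sqrt hκ0.le⟩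
    nlinarith [Real.sq_sqrt hκ0.le, Real.sqrt_nonneg κ]
  have hs0 : (0:ℝ) < s := by linarith
  have hsne : s ≠ 0 := ne_of_gt hs0
  have hss : Real.sqrt (s ^ 2) = s := Real.sqrt_sq hs0.le
  rw [hss]
  have hpos : (0:ℝ) < 3 + 2 * s - s ^ 2 := by nlinarith
  set c := Real.sqrt (3 + 2 * s - s ^ 2) with hcdef
  have hc0 : 0 ≤ c := Real.sqrt_nonneg _
  have hc2 : c ^ 2 = 3 + 2 * s - s ^ 2 := Real.sq_sqrt hpos.le
  have hc1 : 1 < c := by nlinarith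
  set W : Fin 5 → ℝ := ![1 + 2 / s - s, -s, c, 2 / s ^ 2 - 1, s + 2 / s ^ 2] with hWdef
  have key : ∀ w : Fin 5 → ℝ,
      lprod5 w w = 1 → lprod5 wx w = -1 → lprod5 (wc (s ^ 2)) w = -1 →
      lprod5 (wf (s ^ 2)) w = -1 → lprod5 (wcs (s ^ 2)) w = 1 → 1 ≤ lprod5 wz w →
      w = W := by
    intro w h1 hA hB hC hD hz
    simp only [lprod5, wx, wc, wf, wcs, wz, hss, Matrix.cons_val_zero, Matrix.cons_val_one,
      Matrix.head_cons, Matrix.cons_val_two, Matrix.tail_cons, Matrix.cons_val_three,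
      Matrix.cons_val_four] at h1 hA hB hC hD hz
    have e1 : w 1 = -s := by
      linear_combination (norm := (field_simp; ring1))
        (-(1:ℝ)/2) * hA + ((1:ℝ)/2) * hB + (-s) * hD
    have e4 : w 4 = s + 2 / s ^ 2 := by
      linear_combination (norm := (field_simp; ring1))
        (-1 / s ^ 2) * hA + (-1 / s ^ 2) * hB + (-1 : ℝ) * e1
    have e3 : w 3 = 2 / s ^ 2 - 1 := by
      linear_combination (norm := (field_simp; ring1)) hA + e1 + e4
    have e0 : w 0 = 1 + 2 / s - s := by
      linear_combination (norm := (field_simp; ring1))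
        (s / 2) * hC + (-(s / 2) * (2 / s ^ 2 - 1)) * e3 + (1 / s) * e4
    have e2sq : (w 2 - c) * (w 2 + c) = 0 := by
      linear_combination (norm := (field_simp; ring1))
        h1 - hc2 + (-(w 0 + (1 + 2 / s - s))) * e0 + (-(w 1 + -s)) * e1 +
          (-(w 3 + (2 / s ^ 2 - 1))) * e3 + (w 4 + (s + 2 / s ^ 2)) * e4
    have e2 : w 2 = c := by
      rcases mul_eq_zero.mp e2sq with h | h
      · linarith
      · linarith
    funext i
    fin_cases i <;>
      simp only [hWdef, Matrix.cons_val_zero, Matrix.cons_val_one, Matrix.head_cons,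
        Matrix.cons_val_two, Matrix.tail_cons, Matrix.cons_val_three, Matrix.cons_val_four, Fin.isValue]
    · exact e0
    · exact e1
    · exact e2
    · exact e3
    · exact e4
  have hW2 : lprod5 wz W = c := by
    simp [lprod5, wz, hWdef, Matrix.cons_val_zero, Matrix.cons_val_one, Matrix.head_cons,
      Matrix.cons_val_two, Matrix.tail_cons, Matrix.cons_val_three, Matrix.cons_val_four]
  refine ⟨⟨W, ⟨?_, ?_, ?_, ?_, ?_, ?_⟩,
      fun w hw => key w hw.1 hw.2.1 hw.2.2.1 hw.2.2.2.1 hw.2.2.2.2.1 hw.2.2.2.2.2⟩,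
      fun w h1 h2 h3 h4 h5 h6 => by rw [key w h1 h2 h3 h4 h5 h6, hW2], hc1⟩
  · simp only [lprod5, hWdef, Matrix.cons_val_zero, Matrix.cons_val_one, Matrix.head_cons,
      Matrix.cons_val_two, Matrix.tail_cons, Matrix.cons_val_three, Matrix.cons_val_four]
    have h : (1 + 2 / s - s) ^ 2 + (-s) ^ 2 + c ^ 2 + (2 / s ^ 2 - 1) ^ 2
        - (s + 2 / s ^ 2) ^ 2 = 1 := by rw [hc2]; field_simp; ring
    linear_combination h
  · simp only [lprod5, wx, hWdef, Matrix.cons_val_zero, Matrix.cons_val_one, Matrix.head_cons,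
      Matrix.cons_val_two, Matrix.tail_cons, Matrix.cons_val_three, Matrix.cons_val_four]
    field_simp
    all_goals ring
  · simp only [lprod5, wc, hWdef, Matrix.cons_val_zero, Matrix.cons_val_one, Matrix.head_cons,
      Matrix.cons_val_two, Matrix.tail_cons, Matrix.cons_val_three, Matrix.cons_val_four]
    field_simp
    all_goals ring
  · simp only [lprod5, wf, hWdef, hss, Matrix.cons_val_zero, Matrix.cons_val_one, Matrix.head_cons,
      Matrix.cons_val_two, Matrix.tail_cons, Matrix.cons_val_three, Matrix.cons_val_four]
    field_simp
    all_goals ring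
  · simp only [lprod5, wcs, hWdef, hss, Matrix.cons_val_zero, Matrix.cons_val_one, Matrix.head_cons,
      Matrix.cons_val_two, Matrix.tail_cons, Matrix.cons_val_three, Matrix.cons_val_four]
    field_simp
    all_goals ring
  · rw [hW2]; exact hc1.le
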